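/- Let W̄ be the nonnegative adjacency matrix (zero diagonal, acyclic positivity relation) of a DAG on N nodes with a lone source node s (s has no incoming edges and every other node is reachable from s by a directed path of positive-weight edges), let L̄ = D̄ − W̄ᵀ with D̄_{i,i} = Σ_j W̄_{j,i}, and let γ > 0. Then the DAG diffusion x(t) = exp(−γ t L̄) δ_s, which solves dx/dt = −γ L̄ x with initial condition x(0) = δ_s, converges to the all-ones vector: lim_{t→∞} exp(−γ t L̄) δ_s = 𝟙. -/

import Mathlib

/-!
Along `x(t) = exp(-γ t L̄) δ_s` every coordinate satisfies `x_i' = γ ∑_j W̄_{j,i} (x_j - x_i)`.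
The source has no in-neighbours, so `x_s` stays equal to `1`. Any other node `i` has positive
in-degree `d_i`, and `x_i' = -γ d_i x_i + γ ∑_j W̄_{j,i} x_j` is a stable scalar equation forced by
its in-neighbours: once they tend to `1`, the forcing tends to `γ d_i` and `x_i` tends to `1`.
Acyclicity makes the in-neighbour relation well founded, so this induction reaches every node.
-/

open Filter Topology Matrix Real

theorem abs_sub_le_of_abs_deriv_le_mul_exp {w w' : ℝ → ℝ} {lam δ T t : ℝ} (hlam : 0 < lam)
    (hw : ∀ u, HasDerivAt w (w' u) u) (hbound : ∀ u ≥ T, |w' u| ≤ δ * exp (lam * u))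
    (ht : T ≤ t) :
    |w t - w T| ≤ δ / lam * (exp (lam * t) - exp (lam * T)) := by
  have hB : ∀ u, HasDerivAt (fun u => δ / lam * (exp (lam * u) - exp (lam * T)))
      (δ * exp (lam * u)) u := fun u => by
    refine ((((hasDerivAt_id' u).const_mul lam).exp.sub_const _).const_mul _).congr_deriv ?_
    field_simp
  simpa using image_norm_le_of_norm_deriv_right_le_deriv_boundary (f := fun u => w u - w T)
    (((continuous_iff_continuousAt.2 fun u => (hw u).continuousAt).sub
      continuous_const).continuousOn)
    (fun u _ => ((hw u).sub_const _).hasDerivWithinAt) (by simp) hB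
    (fun u hu => hbound u hu.1) ⟨ht, le_rfl⟩

theorem tendsto_exp_neg_mul_mul_of_hasDerivAt {w e : ℝ → ℝ} {lam : ℝ} (hlam : 0 < lam)
    (hw : ∀ t, HasDerivAt w (exp (lam * t) * e t) t) (he : Tendsto e atTop (𝓝 0)) :
    Tendsto (fun t => exp (-(lam * t)) * w t) atTop (𝓝 0) := by
  refine Metric.tendsto_nhds.2 fun ε hε => ?_
  obtain ⟨T, hT⟩ := eventually_atTop.1
    (he.eventually (Metric.closedBall_mem_nhds 0 (by positivity : 0 < lam * (ε / 2))))
  have hdecay : Tendsto (fun t => exp (-(lam * t)) * |w T|) atTop (𝓝 0) := by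
    simpa using (tendsto_exp_atBot.comp
      (tendsto_neg_atTop_atBot.comp (tendsto_id.const_mul_atTop hlam))).mul_const |w T|
  filter_upwards [hdecay.eventually (gt_mem_nhds (half_pos hε)), eventually_ge_atTop T]
    with t hsmall ht
  have hfence := abs_sub_le_of_abs_deriv_le_mul_exp hlam hw (δ := lam * (ε / 2))
    (fun u hu => by
      rw [abs_mul, abs_exp, mul_comm]
      gcongr
      simpa using hT u hu) ht
  rw [mul_div_cancel_left₀ _ hlam.ne'] at hfence
  have hinv : exp (-(lam * t)) * exp (lam * t) = 1 := by rw [← exp_add]; simp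
  have hpos := exp_pos (-(lam * t))
  have hposT := exp_pos (lam * T)
  rw [dist_zero_right, norm_mul, norm_of_nonneg hpos.le, norm_eq_abs]
  calc exp (-(lam * t)) * |w t|
      ≤ exp (-(lam * t)) * (|w T| + ε / 2 * (exp (lam * t) - exp (lam * T))) := by
        gcongr
        calc |w t| = |w T + (w t - w T)| := by ring_nf
          _ ≤ _ := (abs_add_le _ _).trans (by gcongr)
    _ < ε := by nlinarith [mul_pos hpos hposT]

theorem tendsto_of_hasDerivAt_eq_neg_mul_add {f g : ℝ → ℝ} {lam c : ℝ} (hlam : 0 < lam)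
    (hf : ∀ t, HasDerivAt f (-lam * f t + g t) t) (hg : Tendsto g atTop (𝓝 (lam * c))) :
    Tendsto f atTop (𝓝 c) := by
  have hw : ∀ t, HasDerivAt (fun t => exp (lam * t) * (f t - c))
      (exp (lam * t) * (g t - lam * c)) t := fun t => by
    refine (((hasDerivAt_id' t).const_mul lam).exp.mul ((hf t).sub_const c)).congr_deriv ?_
    ring
  have hdiff := tendsto_exp_neg_mul_mul_of_hasDerivAt hlam hw
    (by simpa using hg.sub_const (lam * c))
  have hcancel : ∀ t, exp (-(lam * t)) * (exp (lam * t) * (f t - c)) = f t - c := fun t => by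
    rw [← mul_assoc, ← exp_add]; simp
  simpa [hcancel] using hdiff.add_const c

theorem wellFounded_of_not_transGen_self {α : Type*} [Finite α] {r : α → α → Prop}
    (h : ∀ a, ¬Relation.TransGen r a a) : WellFounded r :=
  haveI : Std.Irrefl (Relation.TransGen r) := ⟨h⟩
  Subrelation.wf Relation.TransGen.single
    (Finite.wellFounded_of_trans_of_irrefl (Relation.TransGen r))

section Matrix

variable {n : Type*} [Fintype n]

-- `NormedSpace.exp` does not depend on the norm; one is chosen only to use the calculus of `exp`.
attribute [local instance] Matrix.linftyOpNormedRing Matrix.linftyOpNormedAlgebra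

theorem hasDerivAt_exp_smul_mulVec {𝕂 : Type*} [RCLike 𝕂] [DecidableEq n] (B : Matrix n n 𝕂)
    (v : n → 𝕂) (t : 𝕂) :
    HasDerivAt (fun u : 𝕂 => NormedSpace.exp (u • B) *ᵥ v)
      (B *ᵥ (NormedSpace.exp (t • B) *ᵥ v)) t := by
  let applyTo : Matrix n n 𝕂 →L[𝕂] n → 𝕂 :=
    LinearMap.toContinuousLinearMap (LinearMap.applyₗ v ∘ₗ Matrix.toLin'.toLinearMap)
  rw [mulVec_mulVec]
  exact applyTo.hasFDerivAt.comp_hasDerivAt t (hasDerivAt_exp_smul_const' B t)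

theorem diagonal_sub_transpose_mulVec_apply [DecidableEq n] {R : Type*} [CommRing R]
    (W : Matrix n n R) (x : n → R) (i : n) :
    (((diagonal fun i => ∑ j, W j i) - Wᵀ) *ᵥ x) i = ∑ j, W j i * (x i - x j) := by
  simp only [sub_mulVec, Pi.sub_apply, mulVec_diagonal, mulVec_transpose, vecMul, dotProduct,
    Finset.sum_mul, mul_sub, ← Finset.sum_sub_distrib]
  exact Finset.sum_congr rfl fun j _ => by ring

theorem tendsto_of_hasDerivAt_eq_sum_mul_sub {W : Matrix n n ℝ} (hW : ∀ i j, 0 ≤ W i j)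
    (hwf : WellFounded fun a b => 0 < W a b) {γ c : ℝ} (hγ : 0 < γ) {x : ℝ → n → ℝ}
    (hx : ∀ i t, HasDerivAt (fun u => x u i) (γ * ∑ j, W j i * (x t j - x t i)) t)
    (hroot : ∀ i, (∀ j, W j i = 0) → Tendsto (fun t => x t i) atTop (𝓝 c)) (i : n) :
    Tendsto (fun t => x t i) atTop (𝓝 c) := by
  induction i using hwf.induction with | _ i ih => ?_
  by_cases hi : ∀ j, W j i = 0
  · exact hroot i hi
  simp only [not_forall] at hi
  obtain ⟨j₀, hj₀⟩ := hi
  have hdeg : 0 < ∑ j, W j i :=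
    Finset.sum_pos' (fun j _ => hW j i) ⟨j₀, Finset.mem_univ _, (hW j₀ i).lt_of_ne' hj₀⟩
  have hin : Tendsto (fun t => ∑ j, W j i * x t j) atTop (𝓝 (∑ j, W j i * c)) := by
    refine tendsto_finsetSum _ fun j _ => ?_
    rcases (hW j i).lt_or_eq with hji | hji
    · exact (ih j hji).const_mul _
    · simp [← hji]
  refine tendsto_of_hasDerivAt_eq_neg_mul_add (mul_pos hγ hdeg)
    (g := fun t => γ * ∑ j, W j i * x t j) (fun t => (hx i t).congr_deriv ?_) ?_
  · simp only [mul_sub, Finset.sum_sub_distrib, ← Finset.sum_mul]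
    ring
  · simpa [Finset.sum_mul, mul_assoc] using hin.const_mul γ

end Matrix

theorem dag_diffusion_converges_to_ones_general
    (N : ℕ) (W : Matrix (Fin N) (Fin N) ℝ)
    (hnonneg : ∀ i j, 0 ≤ W i j)
    (hacyclic : ∀ i, ¬ Relation.TransGen (fun a b => 0 < W a b) i i)
    (s : Fin N) (hsource : ∀ j, W j s = 0)
    (hreach : ∀ i, i ≠ s → Relation.ReflTransGen (fun a b => 0 < W a b) s i)
    (L : Matrix (Fin N) (Fin N) ℝ)
    (hL : L = Matrix.diagonal (fun i => ∑ j, W j i) - Wᵀ)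
    (γ : ℝ) (hγ : 0 < γ) :
    Filter.Tendsto
      (fun t : ℝ => (NormedSpace.exp ((-(γ * t)) • L)) *ᵥ Pi.single s (1 : ℝ))
      Filter.atTop (nhds fun _ => (1 : ℝ)) := by
  set x : ℝ → Fin N → ℝ := fun t => NormedSpace.exp (t • (-γ) • L) *ᵥ Pi.single s 1
  have hx : ∀ i t, HasDerivAt (fun u => x u i) (γ * ∑ j, W j i * (x t j - x t i)) t :=
    fun i t => (hasDerivAt_pi.1 (hasDerivAt_exp_smul_mulVec _ _ t) i).congr_deriv <| by
      change ((-γ • L) *ᵥ x t) i = _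
      simp only [smul_mulVec, Pi.smul_apply, hL, diagonal_sub_transpose_mulVec_apply, smul_eq_mul,
        neg_mul, ← mul_neg, ← Finset.sum_neg_distrib, neg_sub]
  have hxs : ∀ t, x t s = 1 := fun t => by
    have hconst : ∀ u, HasDerivAt (fun u => x u s) 0 u :=
      fun u => (hx s u).congr_deriv (by simp [hsource])
    rw [is_const_of_deriv_eq_zero (fun u => (hconst u).differentiableAt)
      (fun u => (hconst u).deriv) t 0]
    simp [x]
  have hsource_unique : ∀ i, (∀ j, W j i = 0) → i = s := fun i hi => by
    by_contra his
    obtain ⟨j, -, hj⟩ := (hreach i his).cases_tail.resolve_left his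
    exact (hi j).not_gt hj
  have hlim : ∀ i, Tendsto (fun t => x t i) atTop (𝓝 1) :=
    tendsto_of_hasDerivAt_eq_sum_mul_sub hnonneg (wellFounded_of_not_transGen_self hacyclic) hγ hx
      fun i hi => by simp [hsource_unique i hi, hxs]
  convert tendsto_pi_nhds.2 hlim using 3 with t
  rw [smul_smul, mul_neg, mul_comm]

/-- For the directed Laplacian `L̄ = D̄ - W̄ᵀ` of a DAG with a
lone source node `s`, and any diffusion rate `γ > 0`, the DAG diffusion
`x(t) = exp(-γ t L̄) δ_s` converges to the all-ones vector as `t → ∞`. -/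
theorem dag_diffusion_converges_to_ones
    (N : ℕ) (W : Matrix (Fin N) (Fin N) ℝ)
    (hnonneg : ∀ i j, 0 ≤ W i j) (hdiag : ∀ i, W i i = 0)
    (hacyclic : ∀ i, ¬ Relation.TransGen (fun a b => 0 < W a b) i i)
    (s : Fin N) (hsource : ∀ j, W j s = 0)
    (hreach : ∀ i, i ≠ s → Relation.ReflTransGen (fun a b => 0 < W a b) s i)
    (L : Matrix (Fin N) (Fin N) ℝ)
    (hL : L = Matrix.diagonal (fun i => ∑ j, W j i) - Wᵀ)
    (γ : ℝ) (hγ : 0 < γ) :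
    Filter.Tendsto
      (fun t : ℝ => (NormedSpace.exp ((-(γ * t)) • L)) *ᵥ Pi.single s (1 : ℝ))
      Filter.atTop (nhds fun _ => (1 : ℝ)) :=
  dag_diffusion_converges_to_ones_general N W hnonneg hacyclic s hsource hreach L hL γ hγ
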